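/- Let m ≥ 1, let F : Fin m → M_d be matrices with tr(F_α) = 0 for all α and tr(F_α† F_β) = δ_{αβ}, and let G be an m×m positive semidefinite complex matrix. Define the purely dissipative generator L : M_d → M_d by L(ρ) = Σ_{α,β} G_{αβ} ( F_α ρ F_β† − ½ (F_β† F_α ρ + ρ F_β† F_α) ). Then ‖L‖ ≤ 2 · tr G, where ‖L‖ is the operator norm of L with respect to the Frobenius (Hilbert–Schmidt) norm on M_d, i.e., ‖L‖ = sup over ‖A‖₂ = 1 of ‖L(A)‖₂. -/

import Mathlib

/-!
Factor `G = B†B`. Then `L = ∑ₖ D_{Aₖ}` with jump operators `Aₖ = ∑_α conj(B_{kα}) F_α`, where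
`D_A ρ = A ρ A† − ½ (A†A ρ + ρ A†A)`. Submultiplicativity of the Frobenius norm gives
`‖D_A‖ ≤ 2 ‖A‖₂²`, and orthonormality of the `F_α` gives
`∑ₖ ‖Aₖ‖₂² = ∑_{k,α} |B_{kα}|² = tr (B†B) = tr G`.
-/

open Matrix
open scoped Kronecker ComplexOrder

noncomputable section

/-- `Mat d` is the space `M_d` of `d × d` complex matrices. -/
abbrev Mat (d : ℕ) := Matrix (Fin d) (Fin d) ℂ

/- `M_d` carries the Frobenius (Hilbert-Schmidt) norm, so `‖L‖` is the induced operator norm. -/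
attribute [local instance] Matrix.frobeniusNormedAddCommGroup Matrix.frobeniusNormedSpace

open Finset

section

variable {𝕜 ι κ m n : Type*} [RCLike 𝕜] [Fintype ι] [Fintype κ] [Fintype m] [Fintype n]

namespace Matrix

theorem frobenius_norm_sq_eq_sum (M : Matrix m n 𝕜) : ‖M‖ ^ 2 = ∑ i, ∑ j, ‖M i j‖ ^ 2 := by
  rw [frobenius_norm_def, ← Real.rpow_natCast, ← Real.rpow_mul (by positivity)]
  norm_num

theorem re_trace_conjTranspose_mul_self (M : Matrix m n 𝕜) :
    RCLike.re (Mᴴ * M).trace = ∑ i, ∑ j, ‖M i j‖ ^ 2 := by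
  simp only [trace, diag_apply, mul_apply, conjTranspose_apply, RCLike.star_def, RCLike.conj_mul]
  norm_cast
  exact sum_comm

theorem frobenius_norm_sq_eq_re_trace (M : Matrix m n 𝕜) :
    ‖M‖ ^ 2 = RCLike.re (Mᴴ * M).trace := by
  rw [frobenius_norm_sq_eq_sum, re_trace_conjTranspose_mul_self]

theorem conjTranspose_sum_smul_mul_sum_smul (F : ι → Matrix n n 𝕜) (a b : ι → 𝕜) :
    (∑ α, a α • F α)ᴴ * (∑ β, b β • F β) =
      ∑ α, ∑ β, (star (a α) * b β) • ((F α)ᴴ * F β) := by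
  simp only [conjTranspose_sum, conjTranspose_smul, sum_mul, mul_sum, smul_mul_smul_comm]
  exact sum_comm

theorem frobenius_norm_sq_sum_smul_of_orthonormal [DecidableEq ι] (F : ι → Matrix n n 𝕜)
    (hF : ∀ α β, ((F α)ᴴ * F β).trace = if α = β then 1 else 0) (c : ι → 𝕜) :
    ‖∑ α, c α • F α‖ ^ 2 = ∑ α, ‖c α‖ ^ 2 := by
  rw [frobenius_norm_sq_eq_re_trace, conjTranspose_sum_smul_mul_sum_smul]
  simp only [trace_sum, trace_smul, hF, smul_eq_mul, mul_ite, mul_one, mul_zero, sum_ite_eq,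
    mem_univ, if_true, RCLike.star_def, RCLike.conj_mul, map_sum]
  norm_cast

end Matrix

def lindbladTerm (A B ρ : Matrix n n 𝕜) : Matrix n n 𝕜 :=
  A * ρ * Bᴴ - (2 : 𝕜)⁻¹ • (Bᴴ * A * ρ + ρ * (Bᴴ * A))

theorem lindbladTerm_sum_smul_left (F : ι → Matrix n n 𝕜) (a : ι → 𝕜) (B ρ : Matrix n n 𝕜) :
    lindbladTerm (∑ α, a α • F α) B ρ = ∑ α, a α • lindbladTerm (F α) B ρ := by
  simp only [lindbladTerm, sum_mul, mul_sum, smul_mul_assoc, mul_smul_comm, smul_sub, smul_add,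
    smul_sum, sum_sub_distrib, sum_add_distrib, smul_comm (2 : 𝕜)⁻¹ (a _)]

theorem lindbladTerm_sum_smul_right (F : ι → Matrix n n 𝕜) (b : ι → 𝕜) (A ρ : Matrix n n 𝕜) :
    lindbladTerm A (∑ β, b β • F β) ρ = ∑ β, star (b β) • lindbladTerm A (F β) ρ := by
  simp only [lindbladTerm, conjTranspose_sum, conjTranspose_smul, sum_mul, mul_sum, smul_mul_assoc,
    mul_smul_comm, smul_sub, smul_add, smul_sum, sum_sub_distrib, sum_add_distrib,
    smul_comm (2 : 𝕜)⁻¹ (star (b _))]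

theorem norm_lindbladTerm_self_le (A ρ : Matrix n n 𝕜) :
    ‖lindbladTerm A A ρ‖ ≤ 2 * ‖A‖ ^ 2 * ‖ρ‖ := by
  have h₁ : ‖A * ρ * Aᴴ‖ ≤ ‖A‖ ^ 2 * ‖ρ‖ := by
    calc ‖A * ρ * Aᴴ‖ ≤ ‖A‖ * ‖ρ‖ * ‖Aᴴ‖ :=
          (frobenius_norm_mul _ _).trans (by gcongr; exact frobenius_norm_mul _ _)
      _ = ‖A‖ ^ 2 * ‖ρ‖ := by rw [frobenius_norm_conjTranspose]; ring
  have h₂ : ‖Aᴴ * A * ρ + ρ * (Aᴴ * A)‖ ≤ 2 * ‖A‖ ^ 2 * ‖ρ‖ := by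
    have hAA : ‖Aᴴ * A‖ ≤ ‖A‖ ^ 2 :=
      (frobenius_norm_mul _ _).trans_eq (by rw [frobenius_norm_conjTranspose, sq])
    calc ‖Aᴴ * A * ρ + ρ * (Aᴴ * A)‖ ≤ ‖Aᴴ * A‖ * ‖ρ‖ + ‖ρ‖ * ‖Aᴴ * A‖ :=
          (norm_add_le _ _).trans (add_le_add (frobenius_norm_mul _ _) (frobenius_norm_mul _ _))
      _ ≤ ‖A‖ ^ 2 * ‖ρ‖ + ‖ρ‖ * ‖A‖ ^ 2 := by gcongr
      _ = 2 * ‖A‖ ^ 2 * ‖ρ‖ := by ring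
  calc ‖lindbladTerm A A ρ‖ ≤ ‖A * ρ * Aᴴ‖ + ‖(2 : 𝕜)⁻¹ • (Aᴴ * A * ρ + ρ * (Aᴴ * A))‖ :=
        norm_sub_le _ _
    _ = ‖A * ρ * Aᴴ‖ + 2⁻¹ * ‖Aᴴ * A * ρ + ρ * (Aᴴ * A)‖ := by
        rw [norm_smul, norm_inv, RCLike.norm_two]
    _ ≤ 2 * ‖A‖ ^ 2 * ‖ρ‖ := by linarith

theorem sum_smul_lindbladTerm_conjTranspose_mul_self (B : Matrix κ ι 𝕜)
    (F : ι → Matrix n n 𝕜) (ρ : Matrix n n 𝕜) :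
    ∑ α, ∑ β, (Bᴴ * B) α β • lindbladTerm (F α) (F β) ρ =
      ∑ k, lindbladTerm (∑ α, star (B k α) • F α) (∑ α, star (B k α) • F α) ρ := by
  simp only [lindbladTerm_sum_smul_left, lindbladTerm_sum_smul_right, smul_sum, smul_smul,
    star_star, mul_apply, conjTranspose_apply, sum_smul, mul_comm (star (B _ _))]
  rw [sum_comm, sum_comm_cycle]

end

theorem norm_dissipative_lindblad_le_general {d m : ℕ}
    (F : Fin m → Mat d)
    (hFon : ∀ α β : Fin m, ((F α)ᴴ * F β).trace = if α = β then 1 else 0)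
    (G : Matrix (Fin m) (Fin m) ℂ) (hG : G.PosSemidef)
    (L : Mat d →L[ℂ] Mat d)
    (hL : ∀ ρ : Mat d, L ρ =
      ∑ α : Fin m, ∑ β : Fin m, G α β •
        (F α * ρ * (F β)ᴴ -
          (2 : ℂ)⁻¹ • ((F β)ᴴ * F α * ρ + ρ * ((F β)ᴴ * F α)))) :
    ContinuousLinearMap.opNorm (σ₁₂ := RingHom.id ℂ) (E := Mat d) (F := Mat d) L ≤
      2 * (G.trace).re := by
  obtain ⟨B, rfl⟩ : ∃ B : Matrix (Fin m) (Fin m) ℂ, G = Bᴴ * B := by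
    open scoped MatrixOrder in exact CStarAlgebra.nonneg_iff_eq_star_mul_self.mp hG.nonneg
  set A : Fin m → Mat d := fun k ↦ ∑ α, star (B k α) • F α
  have hLA (ρ : Mat d) : L ρ = ∑ k, lindbladTerm (A k) (A k) ρ :=
    (hL ρ).trans (sum_smul_lindbladTerm_conjTranspose_mul_self B F ρ)
  have htr : (Bᴴ * B).trace.re = ∑ k, ‖A k‖ ^ 2 := by
    simp only [A, frobenius_norm_sq_sum_smul_of_orthonormal F hFon, norm_star]
    exact re_trace_conjTranspose_mul_self B
  refine ContinuousLinearMap.opNorm_le_bound L (by rw [htr]; positivity) fun ρ ↦ ?_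
  calc ‖L ρ‖ = ‖∑ k, lindbladTerm (A k) (A k) ρ‖ := by rw [hLA]
    _ ≤ ∑ k, 2 * ‖A k‖ ^ 2 * ‖ρ‖ :=
      (norm_sum_le _ _).trans (sum_le_sum fun k _ ↦ norm_lindbladTerm_self_le _ _)
    _ = 2 * (Bᴴ * B).trace.re * ‖ρ‖ := by rw [htr, mul_sum, sum_mul]

/-- a purely dissipative Lindblad generator `L` on `M_d` built from
traceless orthonormal operators `F_α` and a positive semidefinite matrix `G`
satisfies `‖L‖ ≤ 2 · tr G`, where `‖L‖` is the operator norm induced by the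
Frobenius (Hilbert-Schmidt) norm on `M_d`. -/
theorem norm_dissipative_lindblad_le {d m : ℕ} (hm : 1 ≤ m)
    (F : Fin m → Mat d)
    (hFtr : ∀ α : Fin m, (F α).trace = 0)
    (hFon : ∀ α β : Fin m, ((F α)ᴴ * F β).trace = if α = β then 1 else 0)
    (G : Matrix (Fin m) (Fin m) ℂ) (hG : G.PosSemidef)
    (L : Mat d →L[ℂ] Mat d)
    (hL : ∀ ρ : Mat d, L ρ =
      ∑ α : Fin m, ∑ β : Fin m, G α β •
        (F α * ρ * (F β)ᴴ -
          (2 : ℂ)⁻¹ • ((F β)ᴴ * F α * ρ + ρ * ((F β)ᴴ * F α)))) :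
    ContinuousLinearMap.opNorm (σ₁₂ := RingHom.id ℂ) (E := Mat d) (F := Mat d) L ≤
      2 * (G.trace).re :=
  norm_dissipative_lindblad_le_general F hFon G hG L hL
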